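/- The Euler characteristic is invariant under Barycentric refinement: for any finite simple graph G, χ(G_1) = χ(G), where G_1 is the Barycentric refinement of G. -/

import Mathlib

open Finset

variable {V : Type*} [Fintype V] [DecidableEq V]

/-- The simplices of a graph: nonempty complete subgraphs, encoded as vertex sets. -/
def simplices (G : SimpleGraph V) [DecidableRel G.Adj] : Finset (Finset V) :=
  Finset.univ.filter fun s => s.Nonempty ∧ ∀ a ∈ s, ∀ b ∈ s, a ≠ b → G.Adj a b

/-- dimension of a simplex -/
def dimS (s : Finset V) : ℕ := s.card - 1

/-- Euler characteristic -/
def euler (G : SimpleGraph V) [DecidableRel G.Adj] : ℤ :=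
  ∑ s ∈ simplices G, (-1 : ℤ) ^ dimS s

/-- Wu characteristic -/
def wu (G : SimpleGraph V) [DecidableRel G.Adj] : ℤ :=
  ∑ x ∈ simplices G, ∑ y ∈ simplices G,
    if (x ∩ y).Nonempty then (-1 : ℤ) ^ (dimS x + dimS y) else 0

/-- number of (k+1)-cliques, the k-th entry of the f-vector -/
def nf (G : SimpleGraph V) [DecidableRel G.Adj] (k : ℕ) : ℕ :=
  ((simplices G).filter fun s => s.card = k + 1).card

/-- The Barycentric refinement of `G`: vertices are the simplices of `G`,
two joined when one is strictly contained in the other. -/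
def barycentric (G : SimpleGraph V) [DecidableRel G.Adj] :
    SimpleGraph {s : Finset V // s ∈ simplices G} where
  Adj x y := x.val ⊂ y.val ∨ y.val ⊂ x.val
  symm := by constructor; intro x y h; exact h.symm
  loopless := by constructor; intro x h; cases h with
    | inl h => exact (ssubset_irrefl _ h)
    | inr h => exact (ssubset_irrefl _ h)

instance (G : SimpleGraph V) [DecidableRel G.Adj] :
    DecidableRel (barycentric G).Adj :=
  fun x y => inferInstanceAs (Decidable (x.val ⊂ y.val ∨ y.val ⊂ x.val))


/-- nonempty chains (under inclusion) with elements in `A` -/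
def chainsIn (A : Finset (Finset V)) : Finset (Finset (Finset V)) :=
  A.powerset.filter fun c => c.Nonempty ∧ ∀ x ∈ c, ∀ y ∈ c, x ⊆ y ∨ y ⊆ x

/-- chains of nonempty subsets of `s` containing `s` -/
def fibC (s : Finset V) : Finset (Finset (Finset V)) :=
  (chainsIn (s.powerset.filter fun t => t.Nonempty)).filter fun c => s ∈ c

lemma chain_exists_top (c : Finset (Finset V)) (hne : c.Nonempty)
    (hch : ∀ x ∈ c, ∀ y ∈ c, x ⊆ y ∨ y ⊆ x) : ∃ m ∈ c, ∀ x ∈ c, x ⊆ m := by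
  classical
  induction c using Finset.induction_on with
  | empty => exact absurd hne (by simp)
  | @insert a c ha ih =>
    rcases c.eq_empty_or_nonempty with rfl | hc
    · exact ⟨a, by simp⟩
    · obtain ⟨m, hm, hmax⟩ := ih hc (fun x hx y hy =>
        hch x (mem_insert_of_mem hx) y (mem_insert_of_mem hy))
      rcases hch a (mem_insert_self _ _) m (mem_insert_of_mem hm) with h | h
      · exact ⟨m, mem_insert_of_mem hm, by
          intro x hx; rcases mem_insert.1 hx with rfl | hx
          · exact h
          · exact hmax x hx⟩
      · exact ⟨a, mem_insert_self _ _, by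
          intro x hx; rcases mem_insert.1 hx with rfl | hx
          · exact subset_rfl
          · exact (hmax x hx).trans h⟩

lemma sup_mem_of_chain (c : Finset (Finset V)) (hne : c.Nonempty)
    (hch : ∀ x ∈ c, ∀ y ∈ c, x ⊆ y ∨ y ⊆ x) :
    c.sup id ∈ c ∧ ∀ x ∈ c, x ⊆ c.sup id := by
  obtain ⟨m, hm, hmax⟩ := chain_exists_top c hne hch
  have hsup : c.sup id = m :=
    le_antisymm (Finset.sup_le fun x hx => hmax x hx) (Finset.le_sup (f := id) hm)
  exact ⟨hsup ▸ hm, fun x hx => by rw [hsup]; exact hmax x hx⟩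

lemma mem_chainsIn {A : Finset (Finset V)} {c : Finset (Finset V)} :
    c ∈ chainsIn A ↔ c ⊆ A ∧ c.Nonempty ∧ ∀ x ∈ c, ∀ y ∈ c, x ⊆ y ∨ y ⊆ x := by
  simp [chainsIn, and_assoc]

lemma fiber_eq_fibC (A : Finset (Finset V)) (s : Finset V)
    (hA : ∀ t ∈ A, t.Nonempty) (hdown : ∀ t, t ⊆ s → t.Nonempty → t ∈ A) :
    (chainsIn A).filter (fun c => c.sup id = s) = fibC s := by
  ext c
  simp only [mem_filter, mem_chainsIn, fibC]
  constructor
  · rintro ⟨⟨hsub, hne, hch⟩, hsup⟩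
    obtain ⟨hmem, htop⟩ := sup_mem_of_chain c hne hch
    rw [hsup] at hmem htop
    refine ⟨⟨fun t ht => ?_, hne, hch⟩, hmem⟩
    simp only [mem_powerset, mem_filter]
    exact ⟨htop t ht, hA t (hsub ht)⟩
  · rintro ⟨⟨hsub, hne, hch⟩, hs⟩
    have hsubs : ∀ t ∈ c, t ⊆ s ∧ t.Nonempty := by
      intro t ht; have := hsub ht; simpa [mem_powerset] using this
    refine ⟨⟨fun t ht => hdown t (hsubs t ht).1 (hsubs t ht).2, hne, hch⟩, ?_⟩
    exact le_antisymm (Finset.sup_le fun x hx => (hsubs x hx).1) (Finset.le_sup (f := id) hs)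

lemma neg_one_pow_pred {n : ℕ} (hn : 1 ≤ n) : ((-1 : ℤ)) ^ (n - 1) = -(-1) ^ n := by
  obtain ⟨m, rfl⟩ := Nat.exists_eq_add_of_le hn
  simp [pow_succ, pow_add]

lemma fibC_sum : ∀ (s : Finset V), s.Nonempty →
    ∑ c ∈ fibC s, (-1 : ℤ) ^ (c.card - 1) = (-1) ^ (s.card - 1) := by
  intro s
  induction s using Finset.strongInduction with
  | _ s ih =>
    intro hs
    set P : Finset (Finset V) := s.powerset.filter (fun t => t.Nonempty ∧ t ≠ s) with hP
    set allC : Finset (Finset (Finset V)) :=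
      P.powerset.filter (fun c => ∀ x ∈ c, ∀ y ∈ c, x ⊆ y ∨ y ⊆ x) with hallC
    have hmemP : ∀ {t : Finset V}, t ∈ P ↔ t ⊆ s ∧ t.Nonempty ∧ t ≠ s := by
      intro t; simp [hP, and_assoc]
    have hmemFib : ∀ {u : Finset V} {c : Finset (Finset V)}, c ∈ fibC u ↔
        (∀ t ∈ c, t ⊆ u ∧ t.Nonempty) ∧ c.Nonempty ∧
        (∀ x ∈ c, ∀ y ∈ c, x ⊆ y ∨ y ⊆ x) ∧ u ∈ c := by
      intro u c
      simp only [fibC, mem_filter, mem_chainsIn]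
      constructor
      · rintro ⟨⟨h1, h2, h3⟩, h4⟩
        exact ⟨fun t ht => by simpa [mem_powerset] using h1 ht, h2, h3, h4⟩
      · rintro ⟨h1, h2, h3, h4⟩
        exact ⟨⟨fun t ht => by simpa [mem_powerset] using h1 t ht, h2, h3⟩, h4⟩
    -- Step 1 : bijection erase/insert
    have step1 : ∑ c ∈ fibC s, (-1 : ℤ) ^ (c.card - 1) = ∑ c ∈ allC, (-1 : ℤ) ^ c.card := by
      refine Finset.sum_nbij' (fun c => c.erase s) (fun c => insert s c) ?_ ?_ ?_ ?_ ?_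
      · intro c hc
        obtain ⟨h1, h2, h3, h4⟩ := hmemFib.1 hc
        simp only [hallC, mem_filter, mem_powerset]
        refine ⟨fun t ht => ?_, fun x hx y hy => h3 x (mem_of_mem_erase hx) y (mem_of_mem_erase hy)⟩
        obtain ⟨hts, htc⟩ := mem_erase.1 ht
        exact hmemP.2 ⟨(h1 t htc).1, (h1 t htc).2, hts⟩
      · intro c hc
        simp only [hallC, mem_filter, mem_powerset] at hc
        obtain ⟨h1, h2⟩ := hc
        refine hmemFib.2 ⟨?_, insert_nonempty _ _, ?_, mem_insert_self _ _⟩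
        · intro t ht
          rcases mem_insert.1 ht with rfl | ht
          · exact ⟨subset_rfl, hs⟩
          · exact ⟨(hmemP.1 (h1 ht)).1, (hmemP.1 (h1 ht)).2.1⟩
        · intro x hx y hy
          rcases mem_insert.1 hx with h | hxc
          · rcases mem_insert.1 hy with h' | hyc
            · rw [h, h']; exact Or.inl subset_rfl
            · rw [h]; exact Or.inr (hmemP.1 (h1 hyc)).1
          · rcases mem_insert.1 hy with h' | hyc
            · rw [h']; exact Or.inl (hmemP.1 (h1 hxc)).1
            · exact h2 x hxc y hyc
      · intro c hc
        exact insert_erase (hmemFib.1 hc).2.2.2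
      · intro c hc
        simp only [hallC, mem_filter, mem_powerset] at hc
        refine erase_insert fun hsc => ?_
        exact (hmemP.1 (hc.1 hsc)).2.2 rfl
      · intro c hc
        rw [card_erase_of_mem (hmemFib.1 hc).2.2.2]
    -- Step 2 : allC = insert ∅ (chainsIn P)
    have hveP : ∅ ∉ chainsIn P := by simp [mem_chainsIn]
    have step2 : allC = insert ∅ (chainsIn P) := by
      ext c
      simp only [hallC, mem_filter, mem_powerset, mem_insert, mem_chainsIn]
      constructor
      · rintro ⟨h1, h2⟩
        rcases c.eq_empty_or_nonempty with rfl | hc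
        · exact Or.inl rfl
        · exact Or.inr ⟨h1, hc, h2⟩
      · rintro (rfl | ⟨h1, h2, h3⟩)
        · simp
        · exact ⟨h1, h3⟩
    -- Step 3 : group by sup
    have hmaps : ∀ c ∈ chainsIn P, c.sup id ∈ P := by
      intro c hc
      obtain ⟨h1, h2, h3⟩ := mem_chainsIn.1 hc
      exact h1 (sup_mem_of_chain c h2 h3).1
    have step3 : ∑ c ∈ chainsIn P, (-1 : ℤ) ^ c.card =
        ∑ t ∈ P, ∑ c ∈ (chainsIn P).filter (fun c => c.sup id = t), (-1 : ℤ) ^ c.card :=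
      (Finset.sum_fiberwise_of_maps_to hmaps _).symm
    have hfib : ∀ t ∈ P, (chainsIn P).filter (fun c => c.sup id = t) = fibC t := by
      intro t ht
      obtain ⟨hts, htne, htns⟩ := hmemP.1 ht
      refine fiber_eq_fibC P t (fun u hu => (hmemP.1 hu).2.1) ?_
      intro u hut hune
      refine hmemP.2 ⟨hut.trans hts, hune, fun h => htns ?_⟩
      subst h
      exact subset_antisymm hts hut
    -- Step 4 : evaluate each fiber by induction hypothesis
    have step4 : ∀ t ∈ P, ∑ c ∈ fibC t, (-1 : ℤ) ^ c.card = -(-1 : ℤ) ^ (t.card - 1) := by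
      intro t ht
      obtain ⟨hts, htne, htns⟩ := hmemP.1 ht
      have : ∑ c ∈ fibC t, (-1 : ℤ) ^ c.card = ∑ c ∈ fibC t, -(-1 : ℤ) ^ (c.card - 1) := by
        refine Finset.sum_congr rfl fun c hc => ?_
        have hcne : c.Nonempty := (hmemFib.1 hc).2.1
        rw [neg_one_pow_pred (Nat.one_le_iff_ne_zero.2 (card_ne_zero_of_mem (hmemFib.1 hc).2.2.2)), neg_neg]
      rw [this, Finset.sum_neg_distrib]
      rw [ih t (ssubset_of_subset_of_ne hts htns) htne]
    -- Step 5 : the subset-sum computation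
    have hpow0 : ∑ t ∈ s.powerset, (-1 : ℤ) ^ t.card = 0 :=
      Finset.sum_powerset_neg_one_pow_card_of_nonempty hs
    have hsplit : s.powerset = insert ∅ (insert s P) := by
      ext t
      simp only [mem_powerset, mem_insert, hmemP]
      constructor
      · intro ht
        rcases t.eq_empty_or_nonempty with rfl | htne
        · exact Or.inl rfl
        · by_cases h : t = s
          · exact Or.inr (Or.inl h)
          · exact Or.inr (Or.inr ⟨ht, htne, h⟩)
      · rintro (rfl | rfl | ⟨h, _, _⟩)
        · exact empty_subset _
        · exact subset_rfl
        · exact h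
    have hnotin1 : (∅ : Finset V) ∉ insert s P := by
      simp only [mem_insert, hmemP]
      rintro (h | ⟨-, h, -⟩)
      · exact hs.ne_empty h.symm
      · exact h.ne_empty rfl
    have hnotin2 : s ∉ P := fun h => (hmemP.1 h).2.2 rfl
    have step5 : ∑ t ∈ P, (-1 : ℤ) ^ t.card = -1 - (-1 : ℤ) ^ s.card := by
      have := hpow0
      rw [hsplit, Finset.sum_insert hnotin1, Finset.sum_insert hnotin2] at this
      simp only [card_empty, pow_zero] at this
      linarith
    have step5' : ∑ t ∈ P, (-1 : ℤ) ^ (t.card - 1) = 1 + (-1 : ℤ) ^ s.card := by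
      have h1 : ∑ t ∈ P, (-1 : ℤ) ^ (t.card - 1) = ∑ t ∈ P, -(-1 : ℤ) ^ t.card := by
        refine Finset.sum_congr rfl fun t ht => ?_
        exact neg_one_pow_pred (Nat.one_le_iff_ne_zero.2 (Finset.card_ne_zero.2 (hmemP.1 ht).2.1))
      rw [h1, Finset.sum_neg_distrib, step5]
      ring
    -- Assemble
    rw [step1, step2, Finset.sum_insert hveP, step3]
    have hsum : ∑ t ∈ P, ∑ c ∈ (chainsIn P).filter (fun c => c.sup id = t), (-1 : ℤ) ^ c.card
        = ∑ t ∈ P, -(-1 : ℤ) ^ (t.card - 1) := by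
      refine Finset.sum_congr rfl fun t ht => ?_
      rw [hfib t ht, step4 t ht]
    rw [hsum, Finset.sum_neg_distrib, step5',
      neg_one_pow_pred (Nat.one_le_iff_ne_zero.2 (Finset.card_ne_zero.2 hs))]
    simp only [card_empty, pow_zero]
    ring

lemma mem_simplices {G : SimpleGraph V} [DecidableRel G.Adj] {s : Finset V} :
    s ∈ simplices G ↔ s.Nonempty ∧ ∀ a ∈ s, ∀ b ∈ s, a ≠ b → G.Adj a b := by
  simp [simplices]

lemma subset_mem_simplices {G : SimpleGraph V} [DecidableRel G.Adj] {s t : Finset V}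
    (hs : s ∈ simplices G) (hts : t ⊆ s) (htne : t.Nonempty) : t ∈ simplices G :=
  mem_simplices.2 ⟨htne, fun a ha b hb hab => (mem_simplices.1 hs).2 a (hts ha) b (hts hb) hab⟩

theorem euler_barycentric (G : SimpleGraph V) [DecidableRel G.Adj] :
    euler (barycentric G) = euler G := by
  classical
  have stepA : euler (barycentric G) =
      ∑ c ∈ chainsIn (simplices G), (-1 : ℤ) ^ (c.card - 1) := by
    unfold euler
    refine Finset.sum_nbij (fun c => c.image Subtype.val) ?_ ?_ ?_ ?_
    · intro c hc
      obtain ⟨hne, hadj⟩ := mem_simplices.1 hc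
      refine mem_chainsIn.2 ⟨?_, hne.image _, ?_⟩
      · intro t ht
        obtain ⟨a, _, rfl⟩ := mem_image.1 ht
        exact a.2
      · intro x hx y hy
        obtain ⟨a, ha, rfl⟩ := mem_image.1 hx
        obtain ⟨b, hb, rfl⟩ := mem_image.1 hy
        by_cases hab : a = b
        · rw [hab]; exact Or.inl subset_rfl
        · rcases hadj a ha b hb hab with h | h
          · exact Or.inl h.subset
          · exact Or.inr h.subset
    · exact fun c _ d _ h =>
        Finset.image_injective Subtype.val_injective h
    · intro c' hc'
      obtain ⟨hsub, hne, hch⟩ := mem_chainsIn.1 hc'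
      refine ⟨(simplices G).attach.filter (fun x => x.1 ∈ c'), ?_, ?_⟩
      · refine Finset.mem_coe.2 (mem_simplices.2 ⟨?_, ?_⟩)
        · obtain ⟨t, ht⟩ := hne
          exact ⟨⟨t, hsub ht⟩, by simp [ht]⟩
        · intro a ha b hb hab
          simp only [mem_filter] at ha hb
          have h1 : a.1 ≠ b.1 := fun h => hab (Subtype.ext h)
          rcases hch a.1 ha.2 b.1 hb.2 with h | h
          · exact Or.inl (ssubset_of_subset_of_ne h h1)
          · exact Or.inr (ssubset_of_subset_of_ne h (Ne.symm h1))
      · ext t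
        simp only [mem_image, mem_filter, mem_attach, true_and]
        constructor
        · rintro ⟨a, ha, rfl⟩; exact ha
        · intro ht; exact ⟨⟨t, hsub ht⟩, ht, rfl⟩
    · intro c hc
      rw [Finset.card_image_of_injective _ Subtype.val_injective]
      rfl
  rw [stepA]
  have hmaps : ∀ c ∈ chainsIn (simplices G), c.sup id ∈ simplices G := by
    intro c hc
    obtain ⟨h1, h2, h3⟩ := mem_chainsIn.1 hc
    exact h1 (sup_mem_of_chain c h2 h3).1
  rw [← Finset.sum_fiberwise_of_maps_to hmaps (fun c => (-1 : ℤ) ^ (c.card - 1))]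
  unfold euler
  refine Finset.sum_congr rfl fun s hs => ?_
  rw [fiber_eq_fibC (simplices G) s (fun t ht => (mem_simplices.1 ht).1)
      (fun t hts htne => subset_mem_simplices hs hts htne),
    fibC_sum s (mem_simplices.1 hs).1]
  rfl
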